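/- Stein's characterization of the normal distribution: a real random variable Y satisfies E[F(Y)Y] = σ² E[F'(Y)] for all C¹ functions F with bounded F and F' if and only if Y is Gaussian with mean 0 and variance σ². -/

import Mathlib

/-!
If `Y ~ N(0, σ²)`, Stein's identity is integration by parts against the Gaussian density `p`,
whose derivative is `-x p(x) / σ²`.

Conversely, the identity for `F = arctan` shows that `Y` is integrable: otherwise
`E[arctan(Y) Y]` would be the junk value `0`, while `σ² E[1 / (1 + Y²)] > 0`. The expectations
`E[cos(tY)]` and `E[sin(tY)]` can then be differentiated in `t` under the integral, and the
identity for `F = sin(t ·)` and `F = cos(t ·)` shows that both solve `f' = -σ² t f`. Hence the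
characteristic function of `Y` is `exp(-σ² t² / 2)`, that of `N(0, σ²)`.
-/

open MeasureTheory ProbabilityTheory Real Filter
open scoped NNReal

def SatisfiesSteinIdentity (ν : Measure ℝ) (v : ℝ) : Prop :=
  ∀ F : ℝ → ℝ, ContDiff ℝ 1 F → (∃ M : ℝ, ∀ x, |F x| ≤ M) → (∃ M : ℝ, ∀ x, |deriv F x| ≤ M) →
    ∫ x, F x * x ∂ν = v * ∫ x, deriv F x ∂ν

lemma hasDerivAt_gaussianPDFReal (μ : ℝ) (v : ℝ≥0) (x : ℝ) :
    HasDerivAt (gaussianPDFReal μ v) (-((x - μ) / v) * gaussianPDFReal μ v x) x := by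
  have h : HasDerivAt (fun y => -(y - μ) ^ 2 / (2 * v)) (-((x - μ) / v)) x := by
    refine ((((hasDerivAt_id x).sub_const μ).pow 2).neg.div_const (2 * (v : ℝ))).congr_deriv ?_
    field_simp
    simp
  refine (h.exp.const_mul (√(2 * π * v))⁻¹).congr_deriv ?_
  simp only [gaussianPDFReal]
  ring

lemma integrable_mul_gaussianPDFReal (v : ℝ≥0) :
    Integrable (fun x => x * gaussianPDFReal 0 v x) := by
  rcases eq_or_ne v 0 with rfl | hv
  · simp [gaussianPDFReal_zero_var]
  have hb : 0 < (2 * (v : ℝ))⁻¹ := by positivity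
  refine ((integrable_mul_exp_neg_mul_sq hb).const_mul (√(2 * π * v))⁻¹).congr
    (.of_forall fun x => ?_)
  simp only [gaussianPDFReal, sub_zero]
  ring_nf

lemma satisfiesSteinIdentity_gaussianReal (v : ℝ≥0) :
    SatisfiesSteinIdentity (gaussianReal 0 v) v := by
  rcases eq_or_ne v 0 with rfl | hv
  · intro F _ _ _
    simp [gaussianReal_zero_var]
  rintro F hF ⟨M, hM⟩ ⟨M', hM'⟩
  rw [integral_gaussianReal_eq_integral_smul hv, integral_gaussianReal_eq_integral_smul hv]
  set p := gaussianPDFReal 0 v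
  have hF_meas : AEStronglyMeasurable F := hF.continuous.aestronglyMeasurable
  have ibp : ∫ x, F x * (-((x - 0) / v) * p x) = -∫ x, deriv F x * p x :=
    integral_mul_deriv_eq_deriv_mul_of_integrable
      (fun x _ => (hF.differentiable one_ne_zero x).hasDerivAt)
      (fun x _ => hasDerivAt_gaussianPDFReal 0 v x)
      (((integrable_mul_gaussianPDFReal v).const_mul (-(v : ℝ)⁻¹)).bdd_mul hF_meas
        (.of_forall hM) |>.congr (.of_forall fun x => by simp only [Pi.mul_apply]; ring))
      ((integrable_gaussianPDFReal 0 v).bdd_mul (measurable_deriv F).aestronglyMeasurable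
        (.of_forall hM'))
      ((integrable_gaussianPDFReal 0 v).bdd_mul hF_meas (.of_forall hM))
  have hv0 : (v : ℝ) ≠ 0 := NNReal.coe_ne_zero.mpr hv
  calc ∫ x, p x • (F x * x) = -v * ∫ x, F x * (-((x - 0) / v) * p x) := by
        rw [← integral_const_mul]
        congr 1 with x
        field_simp
        simp only [sub_zero, smul_eq_mul]
        ring
    _ = v * ∫ x, p x • deriv F x := by
        simp_rw [ibp, smul_eq_mul, mul_comm (p _)]
        ring

lemma arctan_mul_self_eq_abs (x : ℝ) : arctan x * x = arctan |x| * |x| := by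
  rcases le_or_gt 0 x with hx | hx
  · rw [abs_of_nonneg hx]
  · rw [abs_of_neg hx, arctan_neg]
    ring

lemma abs_le_one_add_arctan_mul_self (x : ℝ) : |x| ≤ 1 + 4 / π * (arctan x * x) := by
  rw [arctan_mul_self_eq_abs]
  have h0 : 0 ≤ arctan |x| * |x| := mul_nonneg (arctan_nonneg.2 (abs_nonneg x)) (abs_nonneg x)
  rcases le_or_gt |x| 1 with hx | hx
  · have : 0 ≤ 4 / π * (arctan |x| * |x|) := by positivity
    linarith
  · have h1 : π / 4 ≤ arctan |x| := arctan_one ▸ arctan_le_arctan_iff.2 hx.le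
    have h2 : π / 4 * |x| ≤ arctan |x| * |x| := mul_le_mul_of_nonneg_right h1 (abs_nonneg x)
    have h3 : |x| ≤ 4 / π * (arctan |x| * |x|) := by
      rw [div_mul_eq_mul_div, le_div_iff₀ pi_pos]
      linarith
    linarith

lemma SatisfiesSteinIdentity.integrable_id {ν : Measure ℝ} [IsProbabilityMeasure ν] {v : ℝ}
    (hS : SatisfiesSteinIdentity ν v) (hv : 0 < v) : Integrable id ν := by
  have hd_pos : ∀ x, 0 < deriv arctan x := fun x => by rw [Real.deriv_arctan]; positivity
  have hd_le : ∀ x, |deriv arctan x| ≤ 1 := fun x => by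
    rw [abs_of_pos (hd_pos x), Real.deriv_arctan]
    exact div_le_one_of_le₀ (by nlinarith [sq_nonneg x]) (by positivity)
  have hd_int : Integrable (deriv arctan) ν :=
    (integrable_const 1).mono' (measurable_deriv _).aestronglyMeasurable (.of_forall hd_le)
  have hpos : 0 < ∫ x, arctan x * x ∂ν := by
    rw [hS arctan contDiff_arctan ⟨π / 2, fun x => (abs_lt.2
      ⟨neg_pi_div_two_lt_arctan x, arctan_lt_pi_div_two x⟩).le⟩ ⟨1, hd_le⟩]
    refine mul_pos hv ((integral_pos_iff_support_of_nonneg (fun x => (hd_pos x).le) hd_int).2 ?_)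
    rw [Function.support_eq_univ fun x => (hd_pos x).ne']
    simp
  have hint : Integrable (fun x => arctan x * x) ν := by
    by_contra h
    rw [integral_undef h] at hpos
    exact lt_irrefl _ hpos
  exact ((integrable_const 1).add (hint.const_mul (4 / π))).mono'
    measurable_id.aestronglyMeasurable (.of_forall abs_le_one_add_arctan_mul_self)

lemma hasDerivAt_integral_comp_mul {ν : Measure ℝ} [IsFiniteMeasure ν] (hν : Integrable id ν)
    {g g' : ℝ → ℝ} (hg : ∀ y, HasDerivAt g (g' y) y) (hg' : Continuous g') {C : ℝ}
    (hg_bdd : ∀ y, |g y| ≤ C) (hg'_bdd : ∀ y, |g' y| ≤ C) (t : ℝ) :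
    HasDerivAt (fun s => ∫ x, g (s * x) ∂ν) (∫ x, x * g' (t * x) ∂ν) t := by
  have hg_cont : Continuous g := continuous_iff_continuousAt.2 fun y => (hg y).continuousAt
  refine (hasDerivAt_integral_of_dominated_loc_of_deriv_le (F := fun s x => g (s * x))
    (F' := fun s x => x * g' (s * x)) (bound := fun x => |x| * C)
    univ_mem (.of_forall fun s => (hg_cont.comp (by fun_prop)).aestronglyMeasurable)
    ((integrable_const C).mono' (hg_cont.comp (by fun_prop)).aestronglyMeasurable
      (.of_forall fun x => hg_bdd _))
    (continuous_id.mul (hg'.comp (by fun_prop))).aestronglyMeasurable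
    (.of_forall fun x s _ => ?_) (hν.abs.mul_const C) (.of_forall fun x s _ => ?_)).2
  · rw [norm_mul, Real.norm_eq_abs, Real.norm_eq_abs]
    exact mul_le_mul_of_nonneg_left (hg'_bdd _) (abs_nonneg x)
  · exact ((hg (s * x)).comp s ((hasDerivAt_id s).mul_const x)).congr_deriv (by simp [mul_comm])

lemma eq_mul_exp_of_hasDerivAt_eq_neg_mul {f : ℝ → ℝ} {v : ℝ}
    (hf : ∀ t, HasDerivAt f (-(v * t) * f t) t) (t : ℝ) :
    f t = f 0 * rexp (-(v * t ^ 2 / 2)) := by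
  have hexp : ∀ s, HasDerivAt (fun s => rexp (v * s ^ 2 / 2)) (v * s * rexp (v * s ^ 2 / 2)) s :=
    fun s => by
      refine (((hasDerivAt_pow 2 s).const_mul v).div_const 2).exp.congr_deriv ?_
      ring
  have hconst := is_const_of_deriv_eq_zero (f := fun s => f s * rexp (v * s ^ 2 / 2))
    (fun s => ((hf s).fun_mul (hexp s)).differentiableAt)
    (fun s => by rw [((hf s).fun_mul (hexp s)).deriv]; ring) t 0
  simp only [ne_eq, OfNat.ofNat_ne_zero, not_false_eq_true, zero_pow, mul_zero, zero_div,
    exp_zero, mul_one] at hconst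
  rw [← hconst, mul_assoc, ← exp_add]
  simp

lemma SatisfiesSteinIdentity.hasDerivAt_integral_comp_mul {ν : Measure ℝ} [IsFiniteMeasure ν]
    {v : ℝ} (hS : SatisfiesSteinIdentity ν v) (hν : Integrable id ν) {h k : ℝ → ℝ}
    (hh : ∀ y, HasDerivAt h (k y) y) (hk : ∀ y, HasDerivAt k (-h y) y)
    (h_bdd : ∀ y, |h y| ≤ 1) (k_bdd : ∀ y, |k y| ≤ 1) (t : ℝ) :
    HasDerivAt (fun s => ∫ x, h (s * x) ∂ν) (-(v * t) * ∫ x, h (t * x) ∂ν) t := by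
  have hh_cont : Continuous h := continuous_iff_continuousAt.2 fun y => (hh y).continuousAt
  have hk_cont : Continuous k := continuous_iff_continuousAt.2 fun y => (hk y).continuousAt
  have hkt : ∀ x, HasDerivAt (fun x => k (t * x)) (-h (t * x) * t) x := fun x =>
    ((hk (t * x)).comp x ((hasDerivAt_id x).const_mul t)).congr_deriv (by simp)
  have hkt_deriv : deriv (fun x => k (t * x)) = fun x => -h (t * x) * t :=
    funext fun x => (hkt x).deriv
  have stein := hS (fun x => k (t * x))
    (contDiff_one_iff_deriv.2 ⟨fun x => (hkt x).differentiableAt,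
      hkt_deriv ▸ by fun_prop⟩)
    ⟨1, fun x => k_bdd _⟩
    ⟨|t|, fun x => by
      rw [hkt_deriv, abs_mul, abs_neg]
      exact mul_le_of_le_one_left (abs_nonneg t) (h_bdd _)⟩
  refine (_root_.hasDerivAt_integral_comp_mul hν hh hk_cont h_bdd k_bdd t).congr_deriv ?_
  simp_rw [mul_comm _ (k _), stein, hkt_deriv, integral_mul_const, integral_neg]
  ring

lemma charFun_eq_integral_cos_add_integral_sin (ν : Measure ℝ) [IsFiniteMeasure ν] (t : ℝ) :
    charFun ν t = (∫ x, cos (t * x) ∂ν : ℝ) + (∫ x, sin (t * x) ∂ν : ℝ) * Complex.I := by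
  have hcos : Integrable (fun x => cos (t * x)) ν :=
    (integrable_const 1).mono' (by fun_prop) (.of_forall fun x => abs_cos_le_one _)
  have hsin : Integrable (fun x => sin (t * x)) ν :=
    (integrable_const 1).mono' (by fun_prop) (.of_forall fun x => abs_sin_le_one _)
  rw [charFun_apply_real, ← integral_complex_ofReal, ← integral_complex_ofReal,
    ← integral_mul_const, ← integral_add hcos.ofReal (hsin.ofReal.mul_const _)]
  congr 1 with x
  rw [Complex.exp_mul_I]
  push_cast
  ring_nf

lemma SatisfiesSteinIdentity.eq_gaussianReal {ν : Measure ℝ} [IsProbabilityMeasure ν] {v : ℝ≥0}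
    (hS : SatisfiesSteinIdentity ν v) (hv : 0 < v) : ν = gaussianReal 0 v := by
  have hν := hS.integrable_id hv
  refine Measure.ext_of_charFun (funext fun t => ?_)
  have hcos := eq_mul_exp_of_hasDerivAt_eq_neg_mul (hS.hasDerivAt_integral_comp_mul hν
    hasDerivAt_cos (fun y => (hasDerivAt_sin y).neg) abs_cos_le_one
    (fun y => (abs_neg _).trans_le (abs_sin_le_one y))) t
  have hsin := eq_mul_exp_of_hasDerivAt_eq_neg_mul (hS.hasDerivAt_integral_comp_mul hν
    hasDerivAt_sin hasDerivAt_cos abs_sin_le_one abs_cos_le_one) t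
  rw [charFun_eq_integral_cos_add_integral_sin, charFun_gaussianReal, hcos, hsin]
  simp

lemma satisfiesSteinIdentity_map_iff {Ω : Type*} [MeasurableSpace Ω] {μ : Measure Ω}
    {Y : Ω → ℝ} (hY : AEMeasurable Y μ) {v : ℝ} :
    SatisfiesSteinIdentity (μ.map Y) v ↔
      ∀ F : ℝ → ℝ, ContDiff ℝ 1 F → (∃ M : ℝ, ∀ x, |F x| ≤ M) →
        (∃ M : ℝ, ∀ x, |deriv F x| ≤ M) →
        ∫ ω, F (Y ω) * Y ω ∂μ = v * ∫ ω, deriv F (Y ω) ∂μ := by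
  refine forall_congr' fun F => forall_congr' fun hF => ?_
  rw [integral_map (f := fun x => F x * x) hY
      (hF.continuous.mul continuous_id).aestronglyMeasurable,
    integral_map hY (measurable_deriv F).aestronglyMeasurable]

/-- Stein's characterization of the normal distribution: `Y` satisfies
`E[F(Y) Y] = σ² E[F'(Y)]` for all `C¹` functions `F` with `F` and `F'` bounded
iff `Y` is Gaussian with mean `0` and variance `σ²`. -/
theorem stein_characterization
    {Ω : Type*} [MeasurableSpace Ω] (μ : Measure Ω) [IsProbabilityMeasure μ]
    (Y : Ω → ℝ) (hY : Measurable Y) (σ : ℝ) (hσ : 0 < σ) :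
    (∀ F : ℝ → ℝ, ContDiff ℝ 1 F → (∃ M : ℝ, ∀ x, |F x| ≤ M) →
        (∃ M : ℝ, ∀ x, |deriv F x| ≤ M) →
        ∫ ω, F (Y ω) * Y ω ∂μ = σ ^ 2 * ∫ ω, deriv F (Y ω) ∂μ) ↔
      μ.map Y = gaussianReal 0 ⟨σ ^ 2, sq_nonneg σ⟩ := by
  have : IsProbabilityMeasure (μ.map Y) := Measure.isProbabilityMeasure_map hY.aemeasurable
  have hv : (0 : ℝ≥0) < ⟨σ ^ 2, sq_nonneg σ⟩ := by
    change (0 : ℝ) < σ ^ 2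
    positivity
  rw [← satisfiesSteinIdentity_map_iff hY.aemeasurable]
  exact ⟨fun hS => hS.eq_gaussianReal hv, fun h => h ▸ satisfiesSteinIdentity_gaussianReal _⟩
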